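/- Let A be an m×n real matrix, B an n×n real matrix, and C an n×r real matrix. Then ‖A B C‖_max ≤ √n · ‖A‖_max · ‖B‖₂ · ‖C‖_F. -/

import Mathlib

open Matrix

/-- Entrywise maximum (max) norm of a real matrix. -/
noncomputable def maxNorm {m n : ℕ} (A : Matrix (Fin m) (Fin n) ℝ) : ℝ :=
  ⨆ i, ⨆ j, |A i j|

/-- Frobenius norm of a real matrix. -/
noncomputable def frobNorm {m n : ℕ} (A : Matrix (Fin m) (Fin n) ℝ) : ℝ :=
  Real.sqrt (∑ i, ∑ j, (A i j) ^ 2)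

/-- Spectral (operator) norm of a real matrix, i.e. the operator norm of the induced
linear map between Euclidean spaces. -/
noncomputable def specNorm {m n : ℕ} (A : Matrix (Fin m) (Fin n) ℝ) : ℝ :=
  ‖LinearMap.toContinuousLinearMap (Matrix.toEuclideanLin A)‖

/-!
The entry `(A B C) i k` is `⟪row i of A, B (column k of C)⟫`, so Cauchy–Schwarz and the
operator norm bound it by `‖row i of A‖ ‖B‖₂ ‖column k of C‖`; a row of `n` entries of size at most
`‖A‖_max` has Euclidean norm at most `√n ‖A‖_max`, and a column has norm at most `‖C‖_F`.
-/

open scoped RealInnerProductSpace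

lemma maxNorm_nonneg {m n : ℕ} (A : Matrix (Fin m) (Fin n) ℝ) : 0 ≤ maxNorm A :=
  Real.iSup_nonneg fun _ => Real.iSup_nonneg fun _ => abs_nonneg _

lemma abs_le_maxNorm {m n : ℕ} (A : Matrix (Fin m) (Fin n) ℝ) (i : Fin m) (j : Fin n) :
    |A i j| ≤ maxNorm A :=
  (le_ciSup (Set.finite_range fun j => |A i j|).bddAbove j).trans
    (le_ciSup (Set.finite_range fun i => ⨆ j, |A i j|).bddAbove i)

lemma maxNorm_le {m n : ℕ} {A : Matrix (Fin m) (Fin n) ℝ} {c : ℝ} (hc : 0 ≤ c)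
    (h : ∀ i j, |A i j| ≤ c) : maxNorm A ≤ c :=
  Real.iSup_le (fun i => Real.iSup_le (h i) hc) hc

lemma specNorm_nonneg {m n : ℕ} (B : Matrix (Fin m) (Fin n) ℝ) : 0 ≤ specNorm B :=
  norm_nonneg _

lemma frobNorm_nonneg {m n : ℕ} (C : Matrix (Fin m) (Fin n) ℝ) : 0 ≤ frobNorm C :=
  Real.sqrt_nonneg _

lemma norm_toEuclideanLin_le_specNorm_mul {m n : ℕ} (B : Matrix (Fin m) (Fin n) ℝ)
    (v : EuclideanSpace ℝ (Fin n)) : ‖toEuclideanLin B v‖ ≤ specNorm B * ‖v‖ :=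
  (LinearMap.toContinuousLinearMap (toEuclideanLin B)).le_opNorm v

lemma EuclideanSpace.norm_le_sqrt_card_mul {𝕜 ι : Type*} [RCLike 𝕜] [Fintype ι]
    {x : EuclideanSpace 𝕜 ι} {c : ℝ} (hc : 0 ≤ c) (h : ∀ i, ‖x i‖ ≤ c) :
    ‖x‖ ≤ √(Fintype.card ι) * c := by
  rw [EuclideanSpace.norm_eq, ← Real.sqrt_sq hc, ← Real.sqrt_mul (Nat.cast_nonneg _)]
  gcongr
  calc ∑ i, ‖x i‖ ^ 2 ≤ ∑ _i : ι, c ^ 2 := by gcongr with i; exact h i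
    _ = Fintype.card ι * c ^ 2 := by simp

lemma norm_row_le_sqrt_mul_maxNorm {m n : ℕ} (A : Matrix (Fin m) (Fin n) ℝ) (i : Fin m) :
    ‖WithLp.toLp 2 (A i)‖ ≤ √n * maxNorm A := by
  simpa using EuclideanSpace.norm_le_sqrt_card_mul (maxNorm_nonneg A)
    (x := WithLp.toLp 2 (A i)) fun j => abs_le_maxNorm A i j

lemma norm_col_le_frobNorm {n r : ℕ} (C : Matrix (Fin n) (Fin r) ℝ) (k : Fin r) :
    ‖WithLp.toLp 2 (Cᵀ k)‖ ≤ frobNorm C := by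
  rw [EuclideanSpace.norm_eq, frobNorm]
  gcongr with j
  simpa using Finset.single_le_sum (f := fun k' => C j k' ^ 2) (fun _ _ => sq_nonneg _)
    (Finset.mem_univ k)

lemma mul_mul_apply_eq_inner {m n p r : ℕ} (A : Matrix (Fin m) (Fin n) ℝ)
    (B : Matrix (Fin n) (Fin p) ℝ) (C : Matrix (Fin p) (Fin r) ℝ) (i : Fin m) (k : Fin r) :
    (A * B * C) i k = ⟪WithLp.toLp 2 (A i), toEuclideanLin B (WithLp.toLp 2 (Cᵀ k))⟫ := by
  rw [EuclideanSpace.inner_toLp_toLp, star_trivial, dotProduct_comm, Matrix.mul_assoc, mul_apply']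
  rfl

lemma abs_inner_toEuclideanLin_le {m n : ℕ} (B : Matrix (Fin m) (Fin n) ℝ)
    (u : EuclideanSpace ℝ (Fin m)) (v : EuclideanSpace ℝ (Fin n)) :
    |⟪u, toEuclideanLin B v⟫| ≤ ‖u‖ * specNorm B * ‖v‖ := by
  rw [mul_assoc]
  exact (abs_real_inner_le_norm _ _).trans
    (mul_le_mul_of_nonneg_left (norm_toEuclideanLin_le_specNorm_mul B v) (norm_nonneg u))

/-- For an `m × n` matrix `A`, an `n × n` matrix `B` and an `n × r`
matrix `C`, `‖A B C‖_max ≤ √n ‖A‖_max ‖B‖₂ ‖C‖_F`. -/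
theorem stmt8 (m n r : ℕ)
    (A : Matrix (Fin m) (Fin n) ℝ)
    (B : Matrix (Fin n) (Fin n) ℝ)
    (C : Matrix (Fin n) (Fin r) ℝ) :
    maxNorm (A * B * C) ≤ Real.sqrt n * maxNorm A * specNorm B * frobNorm C := by
  have hA := mul_nonneg (Real.sqrt_nonneg n) (maxNorm_nonneg A)
  have hB := specNorm_nonneg B
  refine maxNorm_le (mul_nonneg (mul_nonneg hA hB) (frobNorm_nonneg C)) fun i k => ?_
  rw [mul_mul_apply_eq_inner]
  refine (abs_inner_toEuclideanLin_le B _ _).trans ?_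
  gcongr
  · exact norm_row_le_sqrt_mul_maxNorm A i
  · exact norm_col_le_frobNorm C k
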